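/- Let A be a self-adjoint operator on a Hilbert space, H self-adjoint with bounded commutator in the following sense: there is a bounded operator T such that ⟨Hf, Ag⟩ − ⟨Af, Hg⟩ = ⟨f, Tg⟩ for all f, g ∈ D(H) ∩ D(A), and suppose (H ± i)^{−1} maps a core D₀ of A into D(A). Then for z = ±i, the commutator identity [(H−z)^{−1}, A]f = (H−z)^{−1} T (H−z)^{−1} f (up to a factor) holds for f ∈ D₀, and in particular [(H−z)^{−1}, A] extends to a bounded operator on the Hilbert space with norm at most ‖T‖·‖(H−z)^{−1}‖². -/

import Mathlib

/-!
Evaluating the commutator form at `(R f, R g)` and using `H R = 1 + z R` gives, for `f` in the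
dense set `D₀`, `⟪f, A R g⟫ = ⟪f, R* y⟫` with `y = A g + T R g + (z - z̄) A R g`, hence
`A R g = R* y`. Since `H` is self-adjoint, `R*` is a right inverse of `H - z̄`, so `R* y` lies in
`D(H)` and `(H - z) R* y = A g + T R g`. As `z` is not real, `H - z` is injective and `R` is also a
left inverse of it; applying `R` yields `A R g = R A g + R T R g`. The bounded extension is
`K = R T R`.
-/

open scoped ComplexInnerProductSpace

open scoped ComplexConjugate

namespace LinearPMap

section SelfAdjoint

variable {𝕜 E : Type*} [RCLike 𝕜] [NormedAddCommGroup E] [InnerProductSpace 𝕜 E]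
  [CompleteSpace E] {A : E →ₗ.[𝕜] E}

theorem _root_.IsSelfAdjoint.isFormalAdjoint (hA : IsSelfAdjoint A) : A.IsFormalAdjoint A := by
  simpa only [isSelfAdjoint_def.mp hA] using adjoint_isFormalAdjoint hA.dense_domain

theorem _root_.IsSelfAdjoint.exists_mem_domain_of_inner_eq (hA : IsSelfAdjoint A) {y w : E}
    (h : ∀ x : A.domain, inner 𝕜 w (x : E) = inner 𝕜 y (A x)) :
    ∃ hy : y ∈ A.domain, A ⟨y, hy⟩ = w := by
  have hy : y ∈ A†.domain := mem_adjoint_domain_of_exists y ⟨w, h⟩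
  have hAy : A† ⟨y, hy⟩ = w := adjoint_apply_eq hA.dense_domain ⟨y, hy⟩ h
  revert hy hAy
  rw [isSelfAdjoint_def.mp hA]
  exact fun hy hAy => ⟨hy, hAy⟩

end SelfAdjoint

section Resolvent

variable {E : Type*} [NormedAddCommGroup E] [InnerProductSpace ℂ E]
  {H A : E →ₗ.[ℂ] E} {z : ℂ} {R T : E →L[ℂ] E}

def IsRightResolvent (H : E →ₗ.[ℂ] E) (z : ℂ) (R : E →L[ℂ] E) : Prop :=
  ∀ f, ∃ hf : R f ∈ H.domain, H ⟨R f, hf⟩ - z • R f = f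

def HasBoundedCommutator (H A : E →ₗ.[ℂ] E) (T : E →L[ℂ] E) : Prop :=
  ∀ (f g : E) (hfH : f ∈ H.domain) (hfA : f ∈ A.domain) (hgH : g ∈ H.domain) (hgA : g ∈ A.domain),
    ⟪H ⟨f, hfH⟩, A ⟨g, hgA⟩⟫ - ⟪A ⟨f, hfA⟩, H ⟨g, hgH⟩⟫ = ⟪f, T g⟫

theorem IsFormalAdjoint.eq_zero_of_apply_eq_smul (hH : H.IsFormalAdjoint H) (hz : z.im ≠ 0)
    {u : H.domain} (hu : H u = z • (u : E)) : (u : E) = 0 := by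
  have hsymm := hH u u
  rw [hu, inner_smul_left, inner_smul_right] at hsymm
  have hzz : conj z - z ≠ 0 := sub_ne_zero.mpr (mt Complex.conj_eq_iff_im.mp hz)
  have : (conj z - z) * ⟪(u : E), u⟫ = 0 := by linear_combination hsymm
  exact inner_self_eq_zero.mp ((mul_eq_zero.mp this).resolve_left hzz)

theorem IsRightResolvent.apply_sub_smul (hR : IsRightResolvent H z R)
    (hH : H.IsFormalAdjoint H) (hz : z.im ≠ 0) (u : H.domain) : R (H u - z • u) = u := by
  obtain ⟨hv, hHv⟩ := hR (H u - z • u)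
  set v : H.domain := ⟨R (H u - z • u), hv⟩
  have hdiff : H (v - u) = z • ((v - u : H.domain) : E) := by
    rw [H.map_sub, sub_eq_iff_eq_add.mp hHv]
    simp only [Submodule.coe_sub, smul_sub]
    abel
  exact sub_eq_zero.mp (IsFormalAdjoint.eq_zero_of_apply_eq_smul hH hz hdiff)

-- The commutator form at `(R f, R g)`, rewritten with `H R = 1 + z R` and the symmetry of `A`.
theorem IsRightResolvent.inner_map_apply_eq (hR : IsRightResolvent H z R)
    (hform : HasBoundedCommutator H A T) (hA : A.IsFormalAdjoint A)
    {f g : E} (hRf : R f ∈ A.domain) (hg : g ∈ A.domain) (hRg : R g ∈ A.domain) :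
    ⟪f, A ⟨R g, hRg⟩⟫ =
      ⟪R f, A ⟨g, hg⟩ + T (R g) + (z - conj z) • A ⟨R g, hRg⟩⟫ := by
  obtain ⟨hRfH, hHf⟩ := hR f
  obtain ⟨hRgH, hHg⟩ := hR g
  have hcomm := hform (R f) (R g) hRfH hRf hRgH hRg
  rw [sub_eq_iff_eq_add.mp hHf, sub_eq_iff_eq_add.mp hHg, inner_add_left, inner_smul_left,
    inner_add_right, inner_smul_right, hA ⟨R f, hRf⟩ ⟨g, hg⟩, hA ⟨R f, hRf⟩ ⟨R g, hRg⟩] at hcomm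
  rw [inner_add_right, inner_add_right, inner_smul_right]
  linear_combination hcomm

variable [CompleteSpace E]

theorem IsRightResolvent.adjoint (hR : IsRightResolvent H z R) (hH : IsSelfAdjoint H)
    (hz : z.im ≠ 0) : IsRightResolvent H (conj z) (ContinuousLinearMap.adjoint R) := by
  intro w
  suffices ∃ hw, H ⟨R.adjoint w, hw⟩ = w + conj z • R.adjoint w from
    let ⟨hw, hHw⟩ := this; ⟨hw, sub_eq_of_eq_add hHw⟩
  refine hH.exists_mem_domain_of_inner_eq fun x => ?_
  have hRH : R (H x) = x + z • R x := by
    have h := hR.apply_sub_smul hH.isFormalAdjoint hz x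
    rwa [R.map_sub, R.map_smul, sub_eq_iff_eq_add] at h
  rw [ContinuousLinearMap.adjoint_inner_left, hRH, inner_add_left, inner_smul_left,
    Complex.conj_conj, ContinuousLinearMap.adjoint_inner_left, inner_add_right, inner_smul_right]

theorem IsRightResolvent.commutator_eq (hR : IsRightResolvent H z R) (hH : IsSelfAdjoint H)
    (hz : z.im ≠ 0) (hform : HasBoundedCommutator H A T) (hA : A.IsFormalAdjoint A)
    {D₀ : Set E} (hD₀ : Dense D₀)
    (hRD₀ : ∀ f ∈ D₀, R f ∈ A.domain) {g : E} (hgD₀ : g ∈ D₀) (hg : g ∈ A.domain) :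
    A ⟨R g, hRD₀ g hgD₀⟩ - R (A ⟨g, hg⟩) = R (T (R g)) := by
  set β := A ⟨R g, hRD₀ g hgD₀⟩
  set y := A ⟨g, hg⟩ + T (R g) + (z - conj z) • β
  have hβ : β = R.adjoint y := hD₀.eq_of_inner_right (𝕜 := ℂ) fun f hf => by
    rw [ContinuousLinearMap.adjoint_inner_right]
    exact hR.inner_map_apply_eq hform hA (hRD₀ f hf) hg _
  obtain ⟨hyH, hHy⟩ := hR.adjoint hH hz y
  have hsub : H ⟨R.adjoint y, hyH⟩ - z • R.adjoint y = A ⟨g, hg⟩ + T (R g) := by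
    rw [sub_eq_iff_eq_add.mp hHy, ← hβ]
    simp only [y, sub_smul]
    abel
  have hRy : R (H ⟨R.adjoint y, hyH⟩ - z • R.adjoint y) = R.adjoint y :=
    hR.apply_sub_smul hH.isFormalAdjoint hz ⟨R.adjoint y, hyH⟩
  rw [hsub, R.map_add] at hRy
  rw [hβ, ← hRy, add_sub_cancel_left]

end Resolvent

end LinearPMap

/-- if the commutator form of `H` and `A` is given by a bounded
operator `T` on `D(H) ∩ D(A)`, and the resolvent `R = (H−z)⁻¹` (`z = ±i`) maps
a dense subspace `D₀ ⊆ D(A)` into `D(A)`, then on `D₀` the commutator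
`[R, A] = A R − R A` equals `R T R` and hence extends to a bounded operator of
norm at most `‖T‖ ‖R‖²`. -/
theorem stmt15 {E : Type*} [NormedAddCommGroup E] [InnerProductSpace ℂ E]
    [CompleteSpace E]
    (Hop Aop : E →ₗ.[ℂ] E) (hH : IsSelfAdjoint Hop) (hA : IsSelfAdjoint Aop)
    (T : E →L[ℂ] E)
    (hform : ∀ (f g : E) (hfH : f ∈ Hop.domain) (hfA : f ∈ Aop.domain)
      (hgH : g ∈ Hop.domain) (hgA : g ∈ Aop.domain),
      ⟪Hop ⟨f, hfH⟩, Aop ⟨g, hgA⟩⟫ - ⟪Aop ⟨f, hfA⟩, Hop ⟨g, hgH⟩⟫ = ⟪f, T g⟫)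
    (z : ℂ) (hz : z = Complex.I ∨ z = -Complex.I)
    (R : E →L[ℂ] E)
    (hR : ∀ f : E, ∃ hmem : R f ∈ Hop.domain, Hop ⟨R f, hmem⟩ - z • R f = f)
    (D₀ : Submodule ℂ E) (hD₀A : (D₀ : Set E) ⊆ Aop.domain)
    (hD₀dense : Dense (D₀ : Set E))
    (hRD : ∀ f ∈ D₀, R f ∈ Aop.domain) :
    ∃ K : E →L[ℂ] E, ‖K‖ ≤ ‖T‖ * ‖R‖ ^ 2 ∧
      ∀ f (hf : f ∈ D₀),
        K f = Aop ⟨R f, hRD f hf⟩ - R (Aop ⟨f, hD₀A hf⟩) ∧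
        K f = R (T (R f)) := by
  have hz_im : z.im ≠ 0 := by rcases hz with rfl | rfl <;> simp
  have hRres : Hop.IsRightResolvent z R := hR
  refine ⟨R ∘L T ∘L R, ?_, fun f hf => ⟨?_, rfl⟩⟩
  · calc ‖R ∘L T ∘L R‖ ≤ ‖R‖ * (‖T‖ * ‖R‖) :=
          (R.opNorm_comp_le _).trans (by gcongr; exact T.opNorm_comp_le R)
      _ = ‖T‖ * ‖R‖ ^ 2 := by ring
  · exact (hRres.commutator_eq hH hz_im hform hA.isFormalAdjoint hD₀dense hRD hf (hD₀A hf)).symm
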